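/- arXiv:math/0402139 — 3 statements merged into one kernel-verified Lean document; each statement's English description precedes it below -/
import Mathlib

section
/- Let μ be a Haar measure on G = GL(n,ℝ) and let f : G → ℂ be smooth (as a function on the open set of invertible matrices in M_n(ℝ) ≅ ℝ^{n²}) such that for every multi-index β of partial derivatives with respect to the matrix entries and every N ≥ 0 there is C with |∂^β f(g)| ≤ C·(‖g‖+‖g⁻¹‖)^{−N} and ∫_G |∂^β f(g)|·(‖g‖+‖g⁻¹‖)^N dμ(g) < ∞. Let a_f(m,ξ) = ∫_G f(g)·exp(i((g⁻¹m)·ξ − m·ξ)) dμ(g) and, for m ≠ 0, K_f(m,m') = (2π)^{−n} ∫_{ℝⁿ} e^{i(m−m')·ξ} a_f(m,ξ) dξ. Then for every r > 0: a_f(rm,ξ) = a_f(m,rξ) for all m, ξ ∈ ℝⁿ, and K_f(rm, rm') = r^{−n} K_f(m,m') for all m ≠ 0 and m' ∈ ℝⁿ. In particular the restriction k_f(m) = K_f(m,m) to the diagonal satisfies k_f(rm) = r^{−n} k_f(m), i.e. k_f is homogeneous of degree −n on ℝⁿ∖{0}. -/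
/-!
The phase `(g⁻¹ m)·ξ − m·ξ` of the symbol is bilinear in `(m, ξ)`, so a dilation can be moved
from `m` to `ξ` inside the `G`-integral. In the kernel the dilated symbol is then undone by the
substitution `ξ ↦ r ξ` on `ℝⁿ`, whose Jacobian contributes the factor `r⁻ⁿ`.
-/

open MeasureTheory Matrix
open scoped Real

attribute [local instance] Matrix.normedAddCommGroup Matrix.normedSpace

/-- The operator norm of a real `n × n` matrix, acting on Euclidean space. -/
noncomputable def matOpNorm {n : ℕ} (A : Matrix (Fin n) (Fin n) ℝ) : ℝ :=
  ‖Matrix.toEuclideanCLM (𝕜 := ℝ) A‖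

/-- The symbol `a_f(m, ξ) = ∫_G f(g) exp(i((g⁻¹m)·ξ − m·ξ)) dμ(g)`. -/
noncomputable def symb {n : ℕ} [MeasurableSpace (GL (Fin n) ℝ)]
    (μ : Measure (GL (Fin n) ℝ)) (f : Matrix (Fin n) (Fin n) ℝ → ℂ)
    (m ξ : EuclideanSpace ℝ (Fin n)) : ℂ :=
  ∫ g : GL (Fin n) ℝ, f ↑g *
    Complex.exp (Complex.I *
      ((inner ℝ (Matrix.toEuclideanLin (↑g⁻¹ : Matrix (Fin n) (Fin n) ℝ) m) ξ : ℝ)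
        - (inner ℝ m ξ : ℝ))) ∂μ

/-- The kernel `K_f(m, m') = (2π)⁻ⁿ ∫ e^{i(m−m')·ξ} a_f(m,ξ) dξ`. -/
noncomputable def ker {n : ℕ} [MeasurableSpace (GL (Fin n) ℝ)]
    (μ : Measure (GL (Fin n) ℝ)) (f : Matrix (Fin n) (Fin n) ℝ → ℂ)
    (m m' : EuclideanSpace ℝ (Fin n)) : ℂ :=
  ((2 * π) ^ n)⁻¹ • ∫ ξ : EuclideanSpace ℝ (Fin n),
    Complex.exp (Complex.I * (inner ℝ (m - m') ξ : ℝ)) * symb μ f m ξ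

section Homogeneity

variable {n : ℕ} [MeasurableSpace (GL (Fin n) ℝ)] (μ : Measure (GL (Fin n) ℝ))
  (f : Matrix (Fin n) (Fin n) ℝ → ℂ)

theorem symb_smul_left (r : ℝ) (m ξ : EuclideanSpace ℝ (Fin n)) :
    symb μ f (r • m) ξ = symb μ f m (r • ξ) := by
  unfold symb
  congr 1 with g
  rw [map_smul, real_inner_smul_left, real_inner_smul_left, real_inner_smul_right,
    real_inner_smul_right]

theorem ker_smul_smul (r : ℝ) (m m' : EuclideanSpace ℝ (Fin n)) :
    ker μ f (r • m) (r • m') = |(r ^ n)⁻¹| • ker μ f m m' := by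
  let F : EuclideanSpace ℝ (Fin n) → ℂ := fun ξ =>
    Complex.exp (Complex.I * (inner ℝ (m - m') ξ : ℝ)) * symb μ f m ξ
  have hdilate : ∀ ξ : EuclideanSpace ℝ (Fin n),
      Complex.exp (Complex.I * (inner ℝ (r • m - r • m') ξ : ℝ)) * symb μ f (r • m) ξ
        = F (r • ξ) := fun ξ => by
    simp only [F, symb_smul_left, ← smul_sub, real_inner_smul_left, real_inner_smul_right]
  simp only [ker, hdilate, Measure.integral_comp_smul, finrank_euclideanSpace_fin]
  rw [smul_comm]

end Homogeneity

theorem symbol_and_kernel_homogeneous_general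
    {n : ℕ} [MeasurableSpace (GL (Fin n) ℝ)]
    (μ : Measure (GL (Fin n) ℝ))
    (f : Matrix (Fin n) (Fin n) ℝ → ℂ)
    (r : ℝ) (hr : 0 < r) :
    (∀ m ξ : EuclideanSpace ℝ (Fin n), symb μ f (r • m) ξ = symb μ f m (r • ξ)) ∧
    (∀ m : EuclideanSpace ℝ (Fin n), m ≠ 0 → ∀ m' : EuclideanSpace ℝ (Fin n),
      ker μ f (r • m) (r • m') = ((r ^ n)⁻¹ : ℝ) • ker μ f m m') ∧
    (∀ m : EuclideanSpace ℝ (Fin n), m ≠ 0 →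
      ker μ f (r • m) (r • m) = ((r ^ n)⁻¹ : ℝ) • ker μ f m m) := by
  have hker : ∀ m m' : EuclideanSpace ℝ (Fin n),
      ker μ f (r • m) (r • m') = ((r ^ n)⁻¹ : ℝ) • ker μ f m m' := fun m m' => by
    rw [ker_smul_smul, abs_of_pos (by positivity)]
  exact ⟨symb_smul_left μ f r, fun m _ m' => hker m m', fun m _ => hker m m⟩

/-- Homogeneity of the symbol and of the Schwartz kernel of `π(f)`:
`a_f(rm, ξ) = a_f(m, rξ)`, `K_f(rm, rm') = r⁻ⁿ K_f(m, m')`, and in particular the diagonal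
restriction `k_f(m) = K_f(m,m)` is homogeneous of degree `−n` on `ℝⁿ ∖ {0}`. -/
theorem symbol_and_kernel_homogeneous
    {n : ℕ} [MeasurableSpace (GL (Fin n) ℝ)] [BorelSpace (GL (Fin n) ℝ)]
    (μ : Measure (GL (Fin n) ℝ)) [μ.IsHaarMeasure]
    (f : Matrix (Fin n) (Fin n) ℝ → ℂ)
    (hf_smooth : ContDiffOn ℝ (⊤ : ℕ∞) f {A : Matrix (Fin n) (Fin n) ℝ | IsUnit A})
    (hf_decay : ∀ k N : ℕ, ∃ C : ℝ, ∀ g : GL (Fin n) ℝ,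
      ‖iteratedFDerivWithin ℝ k f {A : Matrix (Fin n) (Fin n) ℝ | IsUnit A} ↑g‖
        ≤ C / (matOpNorm (↑g : Matrix (Fin n) (Fin n) ℝ)
              + matOpNorm (↑g⁻¹ : Matrix (Fin n) (Fin n) ℝ)) ^ N)
    (hf_int : ∀ k N : ℕ, Integrable (fun g : GL (Fin n) ℝ =>
      ‖iteratedFDerivWithin ℝ k f {A : Matrix (Fin n) (Fin n) ℝ | IsUnit A} ↑g‖
        * (matOpNorm (↑g : Matrix (Fin n) (Fin n) ℝ)
            + matOpNorm (↑g⁻¹ : Matrix (Fin n) (Fin n) ℝ)) ^ N) μ)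
    (r : ℝ) (hr : 0 < r) :
    (∀ m ξ : EuclideanSpace ℝ (Fin n), symb μ f (r • m) ξ = symb μ f m (r • ξ)) ∧
    (∀ m : EuclideanSpace ℝ (Fin n), m ≠ 0 → ∀ m' : EuclideanSpace ℝ (Fin n),
      ker μ f (r • m) (r • m') = ((r ^ n)⁻¹ : ℝ) • ker μ f m m') ∧
    (∀ m : EuclideanSpace ℝ (Fin n), m ≠ 0 →
      ker μ f (r • m) (r • m) = ((r ^ n)⁻¹ : ℝ) • ker μ f m m) :=
  symbol_and_kernel_homogeneous_general μ f r hr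
end

section
/- Let k : ℝⁿ∖{0} → ℂ be continuous and homogeneous of degree −n, i.e. k(rm) = r^{−n} k(m) for all r > 0 and m ≠ 0. Let ψ ∈ C_c^∞(ℝⁿ) with support contained in ℝⁿ∖{0} satisfy ∫_0^∞ ψ(tm) t^{−1} dt = 1 for every m ≠ 0. Then for every φ ∈ C_c^∞(ℝⁿ) whose support does not contain 0, all the integrals below converge absolutely and ∫_{ℝⁿ} k(m) ψ(m) ( ∫_0^∞ φ(tm) t^{−1} dt ) dm = ∫_{ℝⁿ} k(m) φ(m) dm. -/
/-!
Write `g = k ψ` and `h = k φ`. Since `ψ` and `φ` vanish near the origin, `g(m) φ(tm)/t` and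
`h(m) ψ(tm)/t` are continuous with compact support in `(0, ∞) × ℝⁿ`, so Fubini applies and the
left side is `∫₀^∞ (∫ g(m) φ(tm) dm) dt/t`. Homogeneity of degree `-n` makes `k(m) dm` dilation
invariant, so the inner integral is `∫ h(u) ψ(u/t) du`. The substitution `t ↦ 1/t` preserves
`dt/t`, and Fubini once more gives `∫ h(u) (∫₀^∞ ψ(tu) dt/t) du = ∫ h`.
-/

open MeasureTheory Set Filter Topology Module

lemma continuous_mul_of_continuousOn_compl_singleton {X R : Type*} [TopologicalSpace X]
    [T1Space X] [MulZeroClass R] [TopologicalSpace R] [ContinuousMul R] {k A : X → R} {x : X}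
    (hk : ContinuousOn k {x}ᶜ) (hA : Continuous A) (hAx : x ∉ tsupport A) :
    Continuous (k * A) :=
  (hk.mul hA.continuousOn).continuous_of_tsupport_subset isOpen_compl_singleton
    (tsupport_mul_subset_right.trans (subset_compl_singleton_iff.2 hAx))

/-- With the convention `B 0 / 0 = 0`, the quotient is continuous across `t = 0` because
`B (t • m)` vanishes for `(t, m)` near `(0, m₀)`. -/
lemma continuous_smul_div_of_notMem_tsupport {E : Type*} [AddCommGroup E] [TopologicalSpace E]
    [Module ℝ E] [ContinuousSMul ℝ E] {B : E → ℂ} (hB : Continuous B)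
    (hB0 : (0 : E) ∉ tsupport B) :
    Continuous fun p : ℝ × E => B (p.1 • p.2) / p.1 := by
  refine continuous_iff_continuousAt.2 fun p => ?_
  by_cases hp : p.1 = 0
  · have hnear : ∀ᶠ q in 𝓝 p, q.1 • q.2 ∈ (tsupport B)ᶜ :=
      continuous_smul.continuousAt.preimage_mem_nhds
        ((isClosed_tsupport B).isOpen_compl.mem_nhds (by simpa [hp] using hB0))
    refine (continuousAt_const (y := (0 : ℂ))).congr (hnear.mono fun q hq => ?_)
    simp [image_eq_zero_of_notMem_tsupport hq]
  · exact (hB.comp continuous_smul).continuousAt.div (by fun_prop) (by exact_mod_cast hp)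

lemma setIntegral_Ioi_comp_inv_div (F : ℝ → ℂ) :
    ∫ t in Ioi 0, F t⁻¹ / t = ∫ t in Ioi 0, F t / t := by
  simpa [mellin, div_eq_inv_mul, Complex.cpow_neg_one] using mellin_comp_inv F 0

section

variable {E : Type*} [NormedAddCommGroup E] [NormedSpace ℝ E]

lemma integrableOn_Ioi_smul_div {B : E → ℂ} (hB : Continuous B) (hBc : HasCompactSupport B)
    (hB0 : (0 : E) ∉ tsupport B) (m : E) :
    IntegrableOn (fun t : ℝ => B (t • m) / t) (Ioi 0) := by
  rcases eq_or_ne m 0 with rfl | hm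
  · simp [image_eq_zero_of_notMem_tsupport hB0]
  have hslice : HasCompactSupport fun t : ℝ => B (t • m) / t :=
    (hBc.comp_isClosedEmbedding (isClosedEmbedding_smul_left hm)).mono fun t ht h =>
      ht (by simp [show B (t • m) = 0 from h])
  exact (((continuous_smul_div_of_notMem_tsupport hB hB0).comp
    (Continuous.prodMk_left m)).integrable_of_hasCompactSupport hslice).integrableOn

lemma hasCompactSupport_mul_smul_div {A B : E → ℂ} (hAc : HasCompactSupport A)
    (hA0 : (0 : E) ∉ tsupport A) (hBc : HasCompactSupport B) :
    HasCompactSupport fun p : ℝ × E => A p.2 * (B (p.1 • p.2) / p.1) := by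
  obtain ⟨a, ha, hball⟩ := Metric.isOpen_iff.1 (isClosed_tsupport A).isOpen_compl 0 hA0
  obtain ⟨d, hd⟩ := hBc.isBounded.subset_closedBall 0
  refine HasCompactSupport.intro ((isCompact_Icc (a := -(d / a)) (b := d / a)).prod hAc)
    fun p hp => ?_
  by_contra hne
  have hAp : p.2 ∈ tsupport A := subset_tsupport A (left_ne_zero_of_mul hne)
  have hBp : p.1 • p.2 ∈ tsupport B :=
    subset_tsupport B (div_ne_zero_iff.1 (right_ne_zero_of_mul hne)).1
  have hnorm : a ≤ ‖p.2‖ := not_lt.1 fun h => hball (by simpa using h) hAp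
  have hsmul : |p.1| * ‖p.2‖ ≤ d := by simpa [norm_smul] using hd hBp
  refine hp ⟨abs_le.1 ((le_div_iff₀ ha).2 ?_), hAp⟩
  nlinarith [abs_nonneg p.1]

variable [MeasurableSpace E] (μ : Measure E)

lemma integral_mul_mul_comp_smul_of_homogeneous [BorelSpace E] [FiniteDimensional ℝ E]
    [μ.IsAddHaarMeasure] {k f g : E → ℂ}
    (hk : ∀ r : ℝ, 0 < r → ∀ m : E, m ≠ 0 → k (r • m) = ((r ^ finrank ℝ E)⁻¹ : ℝ) • k m)
    (hg : g 0 = 0) {t : ℝ} (ht : 0 < t) :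
    ∫ m, k m * f m * g (t • m) ∂μ = ∫ m, k m * g m * f (t⁻¹ • m) ∂μ := by
  have hpoint (u : E) :
      k (t⁻¹ • u) * f (t⁻¹ • u) * g u = (t ^ finrank ℝ E : ℝ) • (k u * g u * f (t⁻¹ • u)) := by
    rcases eq_or_ne u 0 with rfl | hu
    · simp [hg]
    · rw [hk t⁻¹ (inv_pos.2 ht) u hu, inv_pow, inv_inv, smul_mul_assoc, smul_mul_assoc,
        mul_right_comm (k u)]
  have hscale := Measure.integral_comp_smul_of_nonneg μ
    (fun u => k (t⁻¹ • u) * f (t⁻¹ • u) * g u) t (hR := ht.le)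
  simp only [smul_smul, inv_mul_cancel₀ ht.ne', one_smul, hpoint, integral_smul] at hscale
  rw [hscale, inv_mul_cancel₀ (pow_ne_zero _ ht.ne'), one_smul]

variable {A B : E → ℂ}

lemma integrable_mul_mul_smul_div [FiniteDimensional ℝ E] [BorelSpace E]
    [IsFiniteMeasureOnCompacts μ] {k : E → ℂ} (hk : ContinuousOn k {0}ᶜ)
    (hA : Continuous A) (hAc : HasCompactSupport A) (hA0 : (0 : E) ∉ tsupport A)
    (hB : Continuous B) (hBc : HasCompactSupport B) (hB0 : (0 : E) ∉ tsupport B) :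
    Integrable (fun p : ℝ × E => k p.2 * A p.2 * (B (p.1 • p.2) / p.1))
      ((volume.restrict (Ioi 0)).prod μ) := by
  have hkA := continuous_mul_of_continuousOn_compl_singleton hk hA hA0
  have hF : Integrable (fun p : ℝ × E => k p.2 * A p.2 * (B (p.1 • p.2) / p.1))
      (volume.prod μ) :=
    ((hkA.comp continuous_snd).mul (continuous_smul_div_of_notMem_tsupport hB hB0)
      ).integrable_of_hasCompactSupport (hasCompactSupport_mul_smul_div hAc.mul_left
        (fun h => hA0 (tsupport_mul_subset_right h)) hBc)
  exact hF.mono_measure (Measure.prod_mono Measure.restrict_le_self le_rfl)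

lemma integrable_mul_setIntegral_Ioi_smul_div [SFinite μ]
    (h : Integrable (fun p : ℝ × E => A p.2 * (B (p.1 • p.2) / p.1))
      ((volume.restrict (Ioi 0)).prod μ)) :
    Integrable (fun m => A m * ∫ t in Ioi (0 : ℝ), B (t • m) / (t : ℂ)) μ :=
  h.integral_prod_right.congr (ae_of_all _ fun m => integral_const_mul (A m) _)

lemma integral_mul_setIntegral_Ioi_smul_div [SFinite μ]
    (h : Integrable (fun p : ℝ × E => A p.2 * (B (p.1 • p.2) / p.1))
      ((volume.restrict (Ioi 0)).prod μ)) :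
    ∫ m, A m * (∫ t in Ioi (0 : ℝ), B (t • m) / (t : ℂ)) ∂μ =
      ∫ t in Ioi (0 : ℝ), (∫ m, A m * B (t • m) ∂μ) / (t : ℂ) :=
  calc ∫ m, A m * (∫ t in Ioi (0 : ℝ), B (t • m) / (t : ℂ)) ∂μ
      = ∫ m, (∫ t in Ioi (0 : ℝ), A m * (B (t • m) / (t : ℂ))) ∂μ := by
        simp_rw [integral_const_mul]
    _ = ∫ t in Ioi (0 : ℝ), ∫ m, A m * (B (t • m) / (t : ℂ)) ∂μ :=
        (integral_integral_swap h).symm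
    _ = ∫ t in Ioi (0 : ℝ), (∫ m, A m * B (t • m) ∂μ) / (t : ℂ) := by
        simp_rw [mul_div_assoc', integral_div]

lemma integral_mul_setIntegral_Ioi_smul_div_of_homogeneous [FiniteDimensional ℝ E]
    [BorelSpace E] [μ.IsAddHaarMeasure] {k ψ φ : E → ℂ} (hk_cont : ContinuousOn k {0}ᶜ)
    (hk : ∀ r : ℝ, 0 < r → ∀ m : E, m ≠ 0 → k (r • m) = ((r ^ finrank ℝ E)⁻¹ : ℝ) • k m)
    (hψ : Continuous ψ) (hψc : HasCompactSupport ψ) (hψ0 : (0 : E) ∉ tsupport ψ)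
    (hψ_one : ∀ m : E, m ≠ 0 → ∫ t in Ioi (0 : ℝ), ψ (t • m) / (t : ℂ) = 1)
    (hφ : Continuous φ) (hφc : HasCompactSupport φ) (hφ0 : (0 : E) ∉ tsupport φ) :
    ∫ m, k m * ψ m * (∫ t in Ioi (0 : ℝ), φ (t • m) / (t : ℂ)) ∂μ = ∫ m, k m * φ m ∂μ := by
  have hF₁ := integrable_mul_mul_smul_div μ hk_cont hψ hψc hψ0 hφ hφc hφ0
  have hF₂ := integrable_mul_mul_smul_div μ hk_cont hφ hφc hφ0 hψ hψc hψ0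
  calc ∫ m, k m * ψ m * (∫ t in Ioi (0 : ℝ), φ (t • m) / (t : ℂ)) ∂μ
      = ∫ t in Ioi (0 : ℝ), (∫ m, k m * ψ m * φ (t • m) ∂μ) / (t : ℂ) :=
        integral_mul_setIntegral_Ioi_smul_div μ hF₁
    _ = ∫ t in Ioi (0 : ℝ), (∫ m, k m * φ m * ψ (t⁻¹ • m) ∂μ) / (t : ℂ) :=
        setIntegral_congr_fun measurableSet_Ioi fun t ht => by
          rw [integral_mul_mul_comp_smul_of_homogeneous μ hk
            (image_eq_zero_of_notMem_tsupport hφ0) ht]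
    _ = ∫ t in Ioi (0 : ℝ), (∫ m, k m * φ m * ψ (t • m) ∂μ) / (t : ℂ) :=
        setIntegral_Ioi_comp_inv_div fun t => ∫ m, k m * φ m * ψ (t • m) ∂μ
    _ = ∫ m, k m * φ m * (∫ t in Ioi (0 : ℝ), ψ (t • m) / (t : ℂ)) ∂μ :=
        (integral_mul_setIntegral_Ioi_smul_div μ hF₂).symm
    _ = ∫ m, k m * φ m ∂μ := by
        refine integral_congr_ae (ae_of_all _ fun m => ?_)
        rcases eq_or_ne m 0 with rfl | hm
        · simp [image_eq_zero_of_notMem_tsupport hφ0]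
        · simp only [hψ_one m hm, mul_one]

end

/-- For `k` continuous and homogeneous of degree `−n` on `ℝⁿ ∖ {0}`, and `ψ` a
smooth compactly supported cutoff with support away from `0` satisfying `∫_0^∞ ψ(tm) dt/t = 1`
for `m ≠ 0`, the regularized extension of `k` agrees with integration against `k` on test
functions supported away from the origin. -/
theorem homogeneous_extension_agrees_off_origin
    {n : ℕ}
    (k : EuclideanSpace ℝ (Fin n) → ℂ)
    (hk_cont : ContinuousOn k {m : EuclideanSpace ℝ (Fin n) | m ≠ 0})
    (hk_hom : ∀ r : ℝ, 0 < r → ∀ m : EuclideanSpace ℝ (Fin n), m ≠ 0 →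
      k (r • m) = ((r ^ n)⁻¹ : ℝ) • k m)
    (ψ : EuclideanSpace ℝ (Fin n) → ℝ)
    (hψ_smooth : ContDiff ℝ (⊤ : ℕ∞) ψ) (hψ_supp : HasCompactSupport ψ)
    (hψ_zero : (0 : EuclideanSpace ℝ (Fin n)) ∉ tsupport ψ)
    (hψ_one : ∀ m : EuclideanSpace ℝ (Fin n), m ≠ 0 →
      ∫ t in Set.Ioi (0 : ℝ), ψ (t • m) / t = 1)
    (φ : EuclideanSpace ℝ (Fin n) → ℂ)
    (hφ_smooth : ContDiff ℝ (⊤ : ℕ∞) φ) (hφ_supp : HasCompactSupport φ)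
    (hφ_zero : (0 : EuclideanSpace ℝ (Fin n)) ∉ tsupport φ) :
    (∀ m : EuclideanSpace ℝ (Fin n),
      IntegrableOn (fun t : ℝ => φ (t • m) / (t : ℂ)) (Set.Ioi (0 : ℝ)) volume) ∧
    Integrable (fun m : EuclideanSpace ℝ (Fin n) =>
      k m * (ψ m : ℂ) * ∫ t in Set.Ioi (0 : ℝ), φ (t • m) / (t : ℂ)) volume ∧
    Integrable (fun m : EuclideanSpace ℝ (Fin n) => k m * φ m) volume ∧
    ∫ m : EuclideanSpace ℝ (Fin n),
        k m * (ψ m : ℂ) * ∫ t in Set.Ioi (0 : ℝ), φ (t • m) / (t : ℂ)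
      = ∫ m : EuclideanSpace ℝ (Fin n), k m * φ m := by
  set ψC : EuclideanSpace ℝ (Fin n) → ℂ := fun m => (ψ m : ℂ)
  have hψC : Continuous ψC := Complex.continuous_ofReal.comp hψ_smooth.continuous
  have hψC_supp : HasCompactSupport ψC := hψ_supp.comp_left Complex.ofReal_zero
  have hψC_zero : (0 : EuclideanSpace ℝ (Fin n)) ∉ tsupport ψC :=
    fun h => hψ_zero (tsupport_comp_subset Complex.ofReal_zero ψ h)
  have hψC_one (m : EuclideanSpace ℝ (Fin n)) (hm : m ≠ 0) :
      ∫ t in Ioi (0 : ℝ), ψC (t • m) / (t : ℂ) = 1 := by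
    simp only [ψC]
    exact_mod_cast hψ_one m hm
  have hk : ∀ r : ℝ, 0 < r → ∀ m : EuclideanSpace ℝ (Fin n), m ≠ 0 →
      k (r • m) = ((r ^ finrank ℝ (EuclideanSpace ℝ (Fin n)))⁻¹ : ℝ) • k m := by
    simpa only [finrank_euclideanSpace_fin] using hk_hom
  have hφ : Continuous φ := hφ_smooth.continuous
  have hkφ := continuous_mul_of_continuousOn_compl_singleton hk_cont hφ hφ_zero
  refine ⟨integrableOn_Ioi_smul_div hφ hφ_supp hφ_zero, ?_,
    hkφ.integrable_of_hasCompactSupport hφ_supp.mul_left,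
    integral_mul_setIntegral_Ioi_smul_div_of_homogeneous volume hk_cont hk hψC hψC_supp hψC_zero
      hψC_one hφ hφ_supp hφ_zero⟩
  exact integrable_mul_setIntegral_Ioi_smul_div volume (A := fun m => k m * ψC m)
    (integrable_mul_mul_smul_div volume hk_cont hψC hψC_supp hψC_zero hφ hφ_supp hφ_zero)
end

section
/- For t > 0 define f_t : ℝ → ℝ by f_t(y) = (2πt)^{−1/2}·exp(−(log y)²/(4t))·y^{−1} for y > 0 and f_t(y) = 0 for y ≤ 0. Then f_t is a Schwartz function on ℝ; in particular, f_t is infinitely differentiable on all of ℝ (all derivatives vanish at 0) and y^α f_t^{(β)}(y) is bounded on ℝ for all nonnegative integers α, β. -/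
/-!
Substituting `u = log y`, the density is `y ↦ p(u) e^{-a u² + c u}` with `p` a constant polynomial,
`a = 1/(4t)` and `c = -1`, extended by zero. Functions of this shape form a class stable under
`d/dy` (the chain rule contributes `1/y = e^{-u}`, shifting `c` to `c - 1`) and under
multiplication by `y^α` (shifting `c` to `c + α`). Since `a > 0`, the Gaussian factor dominates
`p(u) e^{c u}`, so every member of the class is bounded and tends to `0` as `y → 0`; the latter
makes the difference quotients at `0` converge to `0`, so the zero extension is differentiable
there.
-/

open Polynomial Filter Topology Real

theorem Polynomial.exists_abs_eval_le_mul_exp_abs (p : ℝ[X]) :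
    ∃ C, 0 ≤ C ∧ ∀ u, |p.eval u| ≤ C * exp |u| := by
  induction p using Polynomial.induction_on' with
  | add p q hp hq =>
    obtain ⟨C₁, hC₁, h₁⟩ := hp
    obtain ⟨C₂, hC₂, h₂⟩ := hq
    refine ⟨C₁ + C₂, add_nonneg hC₁ hC₂, fun u => ?_⟩
    rw [eval_add, add_mul]
    exact (abs_add_le _ _).trans (add_le_add (h₁ u) (h₂ u))
  | monomial k b =>
    refine ⟨|b| * k.factorial, by positivity, fun u => ?_⟩
    rw [eval_monomial, abs_mul, abs_pow, mul_assoc]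
    gcongr
    rw [← div_le_iff₀' (by positivity)]
    exact pow_div_factorial_le_exp _ (abs_nonneg u) k

theorem exists_abs_eval_mul_exp_le {a : ℝ} (ha : 0 < a) (p : ℝ[X]) (c : ℝ) :
    ∃ C, 0 ≤ C ∧ ∀ u,
      |p.eval u| * exp (-a * u ^ 2 + c * u) ≤ C * exp (-(a / 2) * u ^ 2) := by
  obtain ⟨C, hC, hp⟩ := p.exists_abs_eval_le_mul_exp_abs
  set b := 1 + |c|
  refine ⟨C * exp (b ^ 2 / (2 * a)), by positivity, fun u => ?_⟩
  have hexponent : |u| + (-a * u ^ 2 + c * u) ≤ b ^ 2 / (2 * a) + -(a / 2) * u ^ 2 := by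
    have hcu : c * u ≤ |c| * |u| := (le_abs_self _).trans (abs_mul c u).le
    -- completing the square: `b |u| ≤ b² / (2a) + a u² / 2`
    have hsq : (b - a * |u|) ^ 2 / (2 * a) = b ^ 2 / (2 * a) - b * |u| + a / 2 * u ^ 2 := by
      field_simp
      rw [← sq_abs u]
      ring
    have : 0 ≤ (b - a * |u|) ^ 2 / (2 * a) := by positivity
    linarith
  calc |p.eval u| * exp (-a * u ^ 2 + c * u)
      ≤ C * exp |u| * exp (-a * u ^ 2 + c * u) := by gcongr; exact hp u
    _ = C * exp (|u| + (-a * u ^ 2 + c * u)) := by rw [mul_assoc, ← exp_add]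
    _ ≤ C * exp (b ^ 2 / (2 * a) + -(a / 2) * u ^ 2) := by gcongr
    _ = C * exp (b ^ 2 / (2 * a)) * exp (-(a / 2) * u ^ 2) := by rw [mul_assoc, ← exp_add]

noncomputable def polyLogGaussian (p : ℝ[X]) (a c y : ℝ) : ℝ :=
  if 0 < y then p.eval (log y) * exp (-a * log y ^ 2 + c * log y) else 0

namespace polyLogGaussian

variable (p : ℝ[X]) (a c : ℝ) {y : ℝ}

theorem of_pos (hy : 0 < y) :
    polyLogGaussian p a c y = p.eval (log y) * exp (-a * log y ^ 2 + c * log y) :=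
  if_pos hy

theorem of_nonpos (hy : y ≤ 0) : polyLogGaussian p a c y = 0 :=
  if_neg hy.not_gt

theorem rpow_mul (s : ℝ) :
    y ^ s * polyLogGaussian p a c y = polyLogGaussian p a (c + s) y := by
  rcases le_or_gt y 0 with hy | hy
  · rw [of_nonpos _ _ _ hy, of_nonpos _ _ _ hy, mul_zero]
  · rw [of_pos _ _ _ hy, of_pos _ _ _ hy, rpow_def_of_pos hy, mul_left_comm, ← exp_add]
    congr 2
    ring

variable {a}

theorem exists_abs_le_mul_exp (ha : 0 < a) :
    ∃ C, 0 ≤ C ∧ ∀ y, |polyLogGaussian p a c y| ≤ C * exp (-(a / 2) * log y ^ 2) := by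
  obtain ⟨C, hC, hbound⟩ := exists_abs_eval_mul_exp_le ha p c
  refine ⟨C, hC, fun y => ?_⟩
  rcases le_or_gt y 0 with hy | hy
  · rw [of_nonpos _ _ _ hy, abs_zero]
    positivity
  · rw [of_pos _ _ _ hy, abs_mul, abs_of_pos (exp_pos _)]
    exact hbound (log y)

theorem exists_abs_le (ha : 0 < a) : ∃ C, ∀ y, |polyLogGaussian p a c y| ≤ C := by
  obtain ⟨C, hC, hbound⟩ := exists_abs_le_mul_exp p c ha
  refine ⟨C, fun y => (hbound y).trans (mul_le_of_le_one_right hC ?_)⟩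
  exact exp_le_one_iff.2 (mul_nonpos_of_nonpos_of_nonneg (by linarith) (sq_nonneg _))

theorem tendsto_nhdsNE_zero (ha : 0 < a) :
    Tendsto (polyLogGaussian p a c) (𝓝[≠] 0) (𝓝 0) := by
  obtain ⟨C, -, hbound⟩ := exists_abs_le_mul_exp p c ha
  have hgauss : Tendsto (fun u => exp (-(a / 2) * u ^ 2)) atBot (𝓝 0) := by
    simpa using (tendsto_rpow_abs_mul_exp_neg_mul_sq_cocompact (half_pos ha) 0).mono_left
      atBot_le_cocompact
  refine squeeze_zero_norm hbound ?_
  simpa using (hgauss.comp tendsto_log_nhdsNE_zero).const_mul C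

theorem hasDerivAt (ha : 0 < a) (y : ℝ) :
    HasDerivAt (polyLogGaussian p a c)
      (polyLogGaussian (derivative p + (C c - C (2 * a) * X) * p) a (c - 1) y) y := by
  rcases lt_trichotomy y 0 with hy | rfl | hy
  · rw [of_nonpos _ _ _ hy.le]
    refine (hasDerivAt_const y 0).congr_of_eventuallyEq ?_
    filter_upwards [Iio_mem_nhds hy] with z hz using of_nonpos _ _ _ (le_of_lt hz)
  · have hslope : slope (polyLogGaussian p a c) 0 = polyLogGaussian p a (c - 1) := by
      funext z
      rw [slope_def_field, of_nonpos _ _ _ le_rfl, sub_zero, sub_zero, div_eq_inv_mul,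
        ← rpow_neg_one, rpow_mul, sub_eq_add_neg]
    rw [hasDerivAt_iff_tendsto_slope, hslope, of_nonpos _ _ _ le_rfl]
    exact tendsto_nhdsNE_zero p (c - 1) ha
  · have hlog := hasDerivAt_log hy.ne'
    have hexp := (((hlog.fun_pow 2).const_mul (-a)).fun_add (hlog.const_mul c)).exp
    refine ((((p.hasDerivAt (log y)).comp y hlog).mul hexp).congr_of_eventuallyEq ?_).congr_deriv
      ?_
    · filter_upwards [Ioi_mem_nhds hy] with z hz using of_pos _ _ _ hz
    · rw [of_pos _ _ _ hy, ← exp_log (inv_pos.2 hy), log_inv,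
        show -a * log y ^ 2 + (c - 1) * log y = (-a * log y ^ 2 + c * log y) + -log y by ring,
        exp_add (-a * log y ^ 2 + c * log y)]
      simp only [Function.comp_apply, eval_add, eval_mul, eval_sub, eval_C, eval_X]
      ring

theorem exists_iteratedDeriv_eq (ha : 0 < a) (n : ℕ) :
    ∃ q : ℝ[X], iteratedDeriv n (polyLogGaussian p a c) = polyLogGaussian q a (c - n) := by
  induction n with
  | zero => exact ⟨p, by rw [iteratedDeriv_zero, Nat.cast_zero, sub_zero]⟩
  | succ n ih =>
    obtain ⟨q, hq⟩ := ih
    refine ⟨derivative q + (C (c - n) - C (2 * a) * X) * q, ?_⟩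
    rw [iteratedDeriv_succ, hq, Nat.cast_succ, ← sub_sub]
    exact funext fun y => (hasDerivAt q (c - n) ha y).deriv

theorem contDiff (ha : 0 < a) : ContDiff ℝ (⊤ : ℕ∞) (polyLogGaussian p a c) := by
  refine contDiff_of_differentiable_iteratedDeriv fun n _ y => ?_
  obtain ⟨q, hq⟩ := exists_iteratedDeriv_eq p c ha n
  rw [hq]
  exact (hasDerivAt q (c - n) ha y).differentiableAt

end polyLogGaussian

/-- The function `f_t(y) = (2πt)^{−1/2} e^{−(log y)²/(4t)} y⁻¹` for `y > 0`,
extended by `0` for `y ≤ 0`, is a Schwartz function on `ℝ`: it is smooth, all its derivatives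
vanish at `0`, and `y^α f_t^{(β)}(y)` is bounded for all `α, β`. -/
theorem langlands_kernel_density_is_schwartz (t : ℝ) (ht : 0 < t) :
    ContDiff ℝ (⊤ : ℕ∞) (fun y : ℝ =>
      if 0 < y then (2 * π * t) ^ (-(1 : ℝ) / 2) * Real.exp (-(Real.log y) ^ 2 / (4 * t)) * y⁻¹
      else 0) ∧
    (∀ β : ℕ, iteratedDeriv β (fun y : ℝ =>
      if 0 < y then (2 * π * t) ^ (-(1 : ℝ) / 2) * Real.exp (-(Real.log y) ^ 2 / (4 * t)) * y⁻¹
      else 0) 0 = 0) ∧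
    ∀ α β : ℕ, ∃ C : ℝ, ∀ y : ℝ,
      |y ^ α * iteratedDeriv β (fun y : ℝ =>
        if 0 < y then (2 * π * t) ^ (-(1 : ℝ) / 2) * Real.exp (-(Real.log y) ^ 2 / (4 * t)) * y⁻¹
        else 0) y| ≤ C := by
  have ha : 0 < (4 * t)⁻¹ := by positivity
  have hf : (fun y : ℝ =>
      if 0 < y then (2 * π * t) ^ (-(1 : ℝ) / 2) * Real.exp (-(Real.log y) ^ 2 / (4 * t)) * y⁻¹
      else 0) = polyLogGaussian (C ((2 * π * t) ^ (-(1 : ℝ) / 2))) (4 * t)⁻¹ (-1) := by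
    funext y
    split_ifs with hy
    · rw [polyLogGaussian.of_pos _ _ _ hy, eval_C, mul_assoc, ← exp_log (inv_pos.2 hy), log_inv,
        ← exp_add]
      congr 2
      ring
    · exact (polyLogGaussian.of_nonpos _ _ _ (not_lt.1 hy)).symm
  rw [hf]
  refine ⟨polyLogGaussian.contDiff _ _ ha, fun β => ?_, fun α β => ?_⟩
  · obtain ⟨q, hq⟩ := polyLogGaussian.exists_iteratedDeriv_eq _ (-1) ha β
    rw [hq, polyLogGaussian.of_nonpos _ _ _ le_rfl]
  · obtain ⟨q, hq⟩ := polyLogGaussian.exists_iteratedDeriv_eq _ (-1) ha β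
    obtain ⟨M, hM⟩ := polyLogGaussian.exists_abs_le q (-1 - β + α) ha
    refine ⟨M, fun y => ?_⟩
    rw [hq, ← rpow_natCast, polyLogGaussian.rpow_mul]
    exact hM y
end
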